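/- arXiv:2302.03243 — 2 statements merged into one kernel-verified Lean document; each statement's English description precedes it below -/
import Mathlib

section
/- Let A, B be two simplexes in projective n-space with no common point and no common face, in perspective from a point. Then A, B are in perspective from a hyperplane: there is a hyperplane v such that for each t = 1,...,n-1, the intersection of corresponding t-spaces of A and B is a (t-1)-space lying in v. -/
/-!
Write a representative of `V` as `a k + c k` with `a k` spanning the line `A k` and `c k` on the
line `B k`; this needs `V ≠ B k`, so if `V` is a vertex of `B` (hence of no `A k`) the roles of the
simplexes are exchanged. The hyperplane is the direction `vectorSpan` of the points `a k`. For a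
proper nonempty index set `S`, the differences `a i - a k = c k - c i` (`i, k ∈ S`) lie in both
`t`-spaces and span a space of dimension `|S| - 1`, while the face hypothesis at an index outside
`S` shows that the two `t`-spaces differ, so their intersection is no larger.
-/

open scoped LinearAlgebra.Projectivization
open Projectivization

/-- The linear span of a set of points of a projective space, as a submodule
of the underlying vector space. -/
noncomputable def pspan (K : Type*) {V : Type*} [DivisionRing K] [AddCommGroup V] [Module K V]
    (s : Set (ℙ K V)) : Submodule K V :=
  ⨆ P ∈ s, Projectivization.submodule P

open Module Submodule Set

section

variable {K E ι : Type*} [Field K] [AddCommGroup E] [Module K E]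

theorem pspan_image_eq_span {P : ι → ℙ K E} {a : ι → E} (hPa : ∀ i, (P i).submodule = K ∙ a i)
    (s : Set ι) : pspan K (P '' s) = span K (a '' s) := by
  rw [pspan, iSup_image, image_eq_iUnion, span_iUnion₂]
  simp only [hPa]

theorem pspan_pair (P Q : ℙ K E) : pspan K {P, Q} = P.submodule ⊔ Q.submodule := by
  rw [pspan, iSup_insert, iSup_singleton]

theorem Projectivization.eq_of_submodule_le {P Q : ℙ K E} (h : P.submodule ≤ Q.submodule) :
    P = Q :=
  submodule_injective <| eq_of_le_of_finrank_le h (by rw [finrank_submodule, finrank_submodule])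

theorem Projectivization.exists_sub_mem_of_le_sup {P Q R : ℙ K E}
    (h : R.submodule ≤ P.submodule ⊔ Q.submodule) (hRQ : R ≠ Q) :
    ∃ a, P.submodule = K ∙ a ∧ R.rep - a ∈ Q.submodule := by
  obtain ⟨a, ha, c, hc, hac⟩ := mem_sup.1 (h (by rw [submodule_eq]; exact mem_span_singleton_self _))
  refine ⟨a, (eq_of_le_of_finrank_le ((span_singleton_le_iff_mem _ _).2 ha) ?_).symm, ?_⟩
  · have ha0 : a ≠ 0 := by
      rintro rfl
      refine hRQ (eq_of_submodule_le ?_)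
      rwa [submodule_eq R, span_singleton_le_iff_mem, ← hac, zero_add]
    rw [finrank_submodule, finrank_span_singleton ha0]
  · rwa [← hac, add_sub_cancel_left]

theorem LinearIndependent.finrank_span_image_le {a : ι → E} (ha : LinearIndependent K a)
    (b : ι → E) (s : Set ι) [Fintype s] :
    finrank K (span K (b '' s)) ≤ finrank K (span K (a '' s)) := by
  rw [image_eq_range, image_eq_range]
  exact (finrank_range_le_card _).trans (finrank_span_eq_card (ha.comp _ Subtype.val_injective)).ge

theorem LinearIndependent.finrank_vectorSpan_image_add_one {a : ι → E}
    (ha : LinearIndependent K a) {S : Finset ι} (hS : S.Nonempty) :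
    finrank K (vectorSpan K (a '' S)) + 1 = S.card := by
  classical
  obtain ⟨m, hm⟩ : ∃ m, S.card = m + 1 := ⟨S.card - 1, by have := hS.card_pos; omega⟩
  rw [← Finset.coe_image, ha.affineIndependent.finrank_vectorSpan_image_finset hm, hm]

variable {a b : ι → E} {v₀ : E}

theorem mem_span_image_of_mem_span_singleton {x : E} {k : ι} {s : Set ι} (hk : k ∈ s)
    (hx : x ∈ K ∙ b k) : x ∈ span K (b '' s) :=
  span_mono (singleton_subset_iff.2 (mem_image_of_mem b hk)) hx

theorem not_span_image_le_span_image [Finite ι] (ha : LinearIndependent K a)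
    (hv₀ : ∀ k, v₀ - a k ∈ K ∙ b k) {j : ι}
    (hface : span K (a '' {k | k ≠ j}) ≠ span K (b '' {k | k ≠ j}))
    {S : Set ι} {i : ι} (hi : i ∈ S) (hj : j ∉ S) : ¬ span K (a '' S) ≤ span K (b '' S) := by
  intro hle
  have hST : span K (b '' S) ≤ span K (b '' {k | k ≠ j}) :=
    span_mono (image_mono fun k hk hkj => hj (hkj ▸ hk))
  have hv₀S : v₀ ∈ span K (b '' S) := by
    rw [← sub_add_cancel v₀ (a i)]
    exact add_mem (mem_span_image_of_mem_span_singleton hi (hv₀ i))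
      (hle (subset_span (mem_image_of_mem a hi)))
  have hAB : span K (a '' {k | k ≠ j}) ≤ span K (b '' {k | k ≠ j}) := by
    rw [span_le]
    rintro _ ⟨k, hkj, rfl⟩
    by_cases hkS : k ∈ S
    · exact hST (hle (subset_span (mem_image_of_mem a hkS)))
    · rw [← sub_sub_cancel v₀ (a k)]
      exact sub_mem (hST hv₀S) (mem_span_image_of_mem_span_singleton hkj (hv₀ k))
  have := Fintype.ofFinite {k | k ≠ j}
  have := FiniteDimensional.span_of_finite K ((toFinite {k | k ≠ j}).image b)
  exact hface (eq_of_le_of_finrank_le hAB (ha.finrank_span_image_le b _))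

theorem span_image_inf_span_image_eq_vectorSpan [Finite ι] (ha : LinearIndependent K a)
    (hv₀ : ∀ k, v₀ - a k ∈ K ∙ b k) {j : ι}
    (hface : span K (a '' {k | k ≠ j}) ≠ span K (b '' {k | k ≠ j}))
    {S : Finset ι} (hS : S.Nonempty) (hj : j ∉ S) :
    span K (a '' S) ⊓ span K (b '' S) = vectorSpan K (a '' S) := by
  classical
  have hle : vectorSpan K (a '' S) ≤ span K (a '' S) ⊓ span K (b '' S) := by
    rw [vectorSpan_def, span_le, vsub_subset_iff]
    rintro _ ⟨i, hi, rfl⟩ _ ⟨k, hk, rfl⟩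
    refine ⟨sub_mem (subset_span (mem_image_of_mem a hi)) (subset_span (mem_image_of_mem a hk)), ?_⟩
    rw [vsub_eq_sub, ← sub_sub_sub_cancel_left (a k) (a i) v₀]
    exact sub_mem (mem_span_image_of_mem_span_singleton hk (hv₀ k))
      (mem_span_image_of_mem_span_singleton hi (hv₀ i))
  have := FiniteDimensional.span_of_finite K (S.finite_toSet.image a)
  have hlt : span K (a '' S) ⊓ span K (b '' S) < span K (a '' S) :=
    inf_lt_left.2 (not_span_image_le_span_image ha hv₀ hface hS.choose_spec hj)
  have hcard : finrank K (span K (a '' S)) ≤ S.card := by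
    rw [← Finset.coe_image]
    exact (finrank_span_finset_le_card _).trans Finset.card_image_le
  have := finrank_lt_finrank_of_lt hlt
  have := ha.finrank_vectorSpan_image_add_one hS
  exact (eq_of_le_of_finrank_le hle (by omega)).symm

variable [Fintype ι] [Nonempty ι]

theorem exists_hyperplane_of_ne_vertex {A B : ι → ℙ K E} {V : ℙ K E}
    (hcard : Fintype.card ι = finrank K E) (hA : pspan K (range A) = ⊤)
    (hface : ∀ j, pspan K (A '' {k | k ≠ j}) ≠ pspan K (B '' {k | k ≠ j}))
    (hV : ∀ i, V.submodule ≤ pspan K {A i, B i}) (hVB : ∀ i, V ≠ B i) :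
    ∃ v : Submodule K E, finrank K v + 1 = Fintype.card ι ∧
      ∀ S : Finset ι, S.Nonempty → S ≠ Finset.univ →
        finrank K ↥(pspan K (A '' S) ⊓ pspan K (B '' S)) + 1 = S.card ∧
        pspan K (A '' S) ⊓ pspan K (B '' S) ≤ v := by
  choose a hAa hv₀ using fun i => exists_sub_mem_of_le_sup (pspan_pair (A i) (B i) ▸ hV i) (hVB i)
  have hpA := pspan_image_eq_span hAa
  have hpB := pspan_image_eq_span fun i => submodule_eq (B i)
  have ha : LinearIndependent K a :=
    linearIndependent_of_top_le_span_of_card_eq_finrank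
      (by rw [← image_univ, ← hpA, image_univ, hA]) hcard
  refine ⟨vectorSpan K (range a), ha.affineIndependent.finrank_vectorSpan_add_one,
    fun S hS hSu => ?_⟩
  obtain ⟨j, -, hj⟩ := Finset.exists_of_ssubset (Finset.ssubset_univ_iff.2 hSu)
  rw [hpA, hpB, span_image_inf_span_image_eq_vectorSpan ha (fun k => submodule_eq (B k) ▸ hv₀ k)
    (hpA _ ▸ hpB _ ▸ hface j) hS hj]
  exact ⟨ha.finrank_vectorSpan_image_add_one hS, vectorSpan_mono K (image_subset_range _ _)⟩

theorem exists_hyperplane_of_perspective {A B : ι → ℙ K E} {V : ℙ K E}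
    (hcard : Fintype.card ι = finrank K E) (hA : pspan K (range A) = ⊤)
    (hB : pspan K (range B) = ⊤) (hpt : ∀ i j, A i ≠ B j)
    (hface : ∀ j, pspan K (A '' {k | k ≠ j}) ≠ pspan K (B '' {k | k ≠ j}))
    (hV : ∀ i, V.submodule ≤ pspan K {A i, B i}) :
    ∃ v : Submodule K E, finrank K v + 1 = Fintype.card ι ∧
      ∀ S : Finset ι, S.Nonempty → S ≠ Finset.univ →
        finrank K ↥(pspan K (A '' S) ⊓ pspan K (B '' S)) + 1 = S.card ∧
        pspan K (A '' S) ⊓ pspan K (B '' S) ≤ v := by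
  by_cases hVB : ∀ i, V ≠ B i
  · exact exists_hyperplane_of_ne_vertex hcard hA hface hV hVB
  · obtain ⟨i, rfl⟩ := not_forall_not.1 hVB
    obtain ⟨v, hv, h⟩ := exists_hyperplane_of_ne_vertex hcard hB (fun j => (hface j).symm)
      (fun k => pair_comm (A k) (B k) ▸ hV k) (fun k h => hpt k i h.symm)
    exact ⟨v, hv, fun S h1 h2 => inf_comm (pspan K (A '' S)) _ ▸ h S h1 h2⟩

end

theorem perspective_point_to_hyperplane_general {K : Type*} [Field K] {n : ℕ}
    (A B : Fin (n+1) → ℙ K (Fin (n+1) → K)) (V : ℙ K (Fin (n+1) → K))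
    (hA : pspan K (Set.range A) = ⊤) (hB : pspan K (Set.range B) = ⊤)
    (hpt : ∀ i j : Fin (n+1), A i ≠ B j)
    (hface : ∀ i j : Fin (n+1),
      pspan K (A '' {k | k ≠ i}) ≠ pspan K (B '' {k | k ≠ j}))
    (hV : ∀ i : Fin (n+1), V.submodule ≤ pspan K {A i, B i}) :
    ∃ v : Submodule K (Fin (n+1) → K), Module.finrank K v = n ∧
      ∀ t : ℕ, 1 ≤ t → t ≤ n - 1 → ∀ S : Finset (Fin (n+1)), S.card = t + 1 →
        Module.finrank K ↥(pspan K (A '' ↑S) ⊓ pspan K (B '' ↑S)) = t ∧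
        pspan K (A '' ↑S) ⊓ pspan K (B '' ↑S) ≤ v := by
  obtain ⟨v, hv, hS⟩ :=
    exists_hyperplane_of_perspective (by simp) hA hB hpt (fun j => hface j j) hV
  refine ⟨v, by simpa using hv, fun t ht1 htn S hSt => ?_⟩
  have hSu : S ≠ Finset.univ := by
    rintro rfl
    rw [Finset.card_univ, Fintype.card_fin] at hSt
    omega
  obtain ⟨hrank, hle⟩ := hS S (Finset.card_pos.1 (by omega)) hSu
  exact ⟨by omega, hle⟩

/-- Extended Desargues theorem: two simplexes of projective `n`-space (over a
field with more than 2 elements) with no common point and no common face that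
are in perspective from a point are in perspective from a hyperplane: there is
a hyperplane `v` such that for each `t = 1,…,n-1` the intersection of
corresponding `t`-spaces is a `(t-1)`-space (vector rank `t`) contained
in `v`. -/
theorem perspective_point_to_hyperplane {K : Type*} [Field K]
    (hK : ∃ x : K, x ≠ 0 ∧ x ≠ 1) {n : ℕ}
    (A B : Fin (n+1) → ℙ K (Fin (n+1) → K)) (V : ℙ K (Fin (n+1) → K))
    (hA : pspan K (Set.range A) = ⊤) (hB : pspan K (Set.range B) = ⊤)
    (hpt : ∀ i j : Fin (n+1), A i ≠ B j)
    (hface : ∀ i j : Fin (n+1),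
      pspan K (A '' {k | k ≠ i}) ≠ pspan K (B '' {k | k ≠ j}))
    (hV : ∀ i : Fin (n+1), V.submodule ≤ pspan K {A i, B i}) :
    ∃ v : Submodule K (Fin (n+1) → K), Module.finrank K v = n ∧
      ∀ t : ℕ, 1 ≤ t → t ≤ n - 1 → ∀ S : Finset (Fin (n+1)), S.card = t + 1 →
        Module.finrank K ↥(pspan K (A '' ↑S) ⊓ pspan K (B '' ↑S)) = t ∧
        pspan K (A '' ↑S) ⊓ pspan K (B '' ↑S) ≤ v :=
  perspective_point_to_hyperplane_general A B V hA hB hpt hface hV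
end

section
/- Let A, B be two simplexes in projective n-space with no common point and no common hyperplane (face). If A, B are in perspective from a hyperplane, then they are in perspective from a point. -/
/-!
Take representatives `a i` of the vertices of `A` as a basis, let `b i` represent the vertices
of `B`, and let `φ` be a nonzero linear form vanishing on `v`. For `i ≠ j` the lines `A i A j` and
`B i B j` meet in a point of `v`; comparing its `k`-th coordinate (`k ≠ i, j`) with its value
under `φ` gives `φ (b j) * c i k = φ (b i) * c j k`, where `c i k` is the `k`-th coordinate of
`b i`. If no `B i` lies in `v`, rescaling `b i` to `φ (b i) = 1` makes `c i k` independent of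
`i ≠ k`, and the vector with these coordinates is the centre. If some `B i₀` lies in `v`, the
relations put every `B i` with `i ≠ m` in `v` and on the line `A i A m` for a suitable `m`, and
`A m` is the centre.
-/

open scoped LinearAlgebra.Projectivization
open Projectivization

open Submodule

namespace Module.Basis

variable {ι K V : Type*} [Field K] [AddCommGroup V] [Module K V] (a : Basis ι K V)

theorem exists_repr_ne_zero_of_notMem_span_singleton {x : V} {i : ι} (hx : x ∉ K ∙ a i) :
    ∃ k ≠ i, a.repr x k ≠ 0 := by
  rw [← Set.image_singleton, a.mem_span_image, Set.not_subset] at hx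
  obtain ⟨k, hk, hki⟩ := hx
  exact ⟨k, hki, Finsupp.mem_support_iff.1 hk⟩

theorem mem_span_singleton_of_repr_eq_zero {x : V} {i : ι} (hx : ∀ k ≠ i, a.repr x k = 0) :
    x ∈ K ∙ a i := by
  by_contra h
  obtain ⟨k, hki, hk⟩ := a.exists_repr_ne_zero_of_notMem_span_singleton h
  exact hk (hx k hki)

theorem repr_eq_zero_of_mem_span_pair {x : V} {i j k : ι} (hx : x ∈ span K {a i, a j})
    (hki : k ≠ i) (hkj : k ≠ j) : a.repr x k = 0 := by
  rw [← Set.image_pair, a.mem_span_image] at hx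
  by_contra hk
  rcases hx (Finsupp.mem_support_iff.2 hk) with h | h <;> contradiction

theorem exists_sub_mem_span_singleton [Finite ι] [Nontrivial ι] (b : ι → V)
    (h : ∀ i j k, i ≠ j → k ≠ i → k ≠ j → a.repr (b i) k = a.repr (b j) k) :
    ∃ w, ∀ i, w - b i ∈ K ∙ a i := by
  choose σ hσ using fun k : ι => exists_ne k
  -- the `k`-th coordinate of `w` is the common value of `a.repr (b j) k` over `j ≠ k`
  refine ⟨a.repr.symm (Finsupp.equivFunOnFinite.symm fun k => a.repr (b (σ k)) k), fun i => ?_⟩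
  refine a.mem_span_singleton_of_repr_eq_zero fun k hki => ?_
  rw [map_sub, LinearEquiv.apply_symm_apply, Finsupp.sub_apply,
    Finsupp.coe_equivFunOnFinite_symm, sub_eq_zero]
  rcases eq_or_ne (σ k) i with hσi | hσi
  · rw [hσi]
  · exact h _ _ _ hσi (hσ k).symm hki

theorem mul_repr_eq_of_mem_span_pair_of_mem_ker (b : ι → V) (φ : V →ₗ[K] K) {i j k : ι}
    (hki : k ≠ i) (hkj : k ≠ j) {p : V} (hp : p ≠ 0) (hpa : p ∈ span K {a i, a j})
    (hpb : p ∈ span K {b i, b j}) (hφp : p ∈ LinearMap.ker φ) :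
    φ (b j) * a.repr (b i) k = φ (b i) * a.repr (b j) k := by
  obtain ⟨z, w, rfl⟩ := mem_span_pair.1 hpb
  have hcoord : z * a.repr (b i) k + w * a.repr (b j) k = 0 := by
    simpa using a.repr_eq_zero_of_mem_span_pair hpa hki hkj
  have hφ : z * φ (b i) + w * φ (b j) = 0 := by simpa using LinearMap.mem_ker.1 hφp
  have hzw : z ≠ 0 ∨ w ≠ 0 := by
    contrapose! hp
    simp [hp]
  rcases hzw with hz | hw
  · apply mul_left_cancel₀ hz
    linear_combination φ (b j) * hcoord - a.repr (b j) k * hφ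
  · apply mul_left_cancel₀ hw
    linear_combination a.repr (b i) k * hφ - φ (b i) * hcoord

theorem mem_span_pair_of_repr_eq_zero {x : V} {i m : ι}
    (hx : ∀ k, k ≠ i → k ≠ m → a.repr x k = 0) (hm : a.repr x m ≠ 0) :
    a m ∈ span K {a i, x} := by
  have hy : (a.repr x m)⁻¹ • x - a m ∈ K ∙ a i := by
    refine a.mem_span_singleton_of_repr_eq_zero fun k hki => ?_
    rcases eq_or_ne k m with rfl | hkm
    · simp [hm]
    · simp [hx k hki hkm, Finsupp.single_eq_of_ne hkm]
  have hspan : K ∙ a i ≤ span K {a i, x} :=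
    span_mono (Set.singleton_subset_iff.2 (Set.mem_insert _ _))
  have hx' : x ∈ span K {a i, x} := subset_span (Set.mem_insert_of_mem _ rfl)
  simpa using sub_mem (smul_mem _ (a.repr x m)⁻¹ hx') (hspan hy)

theorem exists_mem_span_pair_of_forall_ne_zero [Finite ι] [Nonempty ι] (b : ι → V)
    (φ : V →ₗ[K] K) (hb : ∀ i, b i ∉ K ∙ a i) (hφ : ∀ i, φ (b i) ≠ 0)
    (hkey : ∀ i j k, i ≠ j → k ≠ i → k ≠ j →
      φ (b j) * a.repr (b i) k = φ (b i) * a.repr (b j) k) :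
    ∃ w ≠ 0, ∀ i, w ∈ span K {a i, b i} := by
  obtain ⟨i₀⟩ := ‹Nonempty ι›
  have : Nontrivial ι := by
    obtain ⟨k, hk, -⟩ := a.exists_repr_ne_zero_of_notMem_span_singleton (hb i₀)
    exact nontrivial_of_ne k i₀ hk
  obtain ⟨w, hw⟩ := a.exists_sub_mem_span_singleton (fun i => (φ (b i))⁻¹ • b i)
    fun i j k hij hki hkj => by
      simp only [map_smul, Finsupp.smul_apply, smul_eq_mul]
      field_simp [hφ i, hφ j]
      linear_combination hkey i j k hij hki hkj
  refine ⟨w, ?_, fun i => ?_⟩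
  · rintro rfl
    refine hb i₀ ?_
    simpa [hφ i₀, smul_mem_iff] using hw i₀
  · rw [span_insert, ← sub_add_cancel w ((φ (b i))⁻¹ • b i)]
    exact add_mem_sup (hw i) (smul_mem _ _ (mem_span_singleton_self _))

theorem exists_mem_span_pair_of_eq_zero (b : ι → V) (φ : V →ₗ[K] K) (hb : ∀ i, b i ∉ K ∙ a i)
    (hφ : ∃ m, φ (b m) ≠ 0) {i₀ : ι} (hi₀ : φ (b i₀) = 0)
    (hkey : ∀ i j k, i ≠ j → k ≠ i → k ≠ j →
      φ (b j) * a.repr (b i) k = φ (b i) * a.repr (b j) k) :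
    ∃ w ≠ 0, ∀ i, w ∈ span K {a i, b i} := by
  obtain ⟨m, hmi₀, hi₀m⟩ := a.exists_repr_ne_zero_of_notMem_span_singleton (hb i₀)
  have hφ_eq_zero : ∀ j ≠ m, φ (b j) = 0 := by
    intro j hjm
    rcases eq_or_ne j i₀ with rfl | hji₀
    · exact hi₀
    have h := hkey i₀ j m hji₀.symm hmi₀ hjm.symm
    rw [hi₀, zero_mul] at h
    exact (mul_eq_zero.1 h).resolve_right hi₀m
  have hφm : φ (b m) ≠ 0 := by
    obtain ⟨j, hj⟩ := hφ
    rcases eq_or_ne j m with rfl | hjm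
    · exact hj
    · exact absurd (hφ_eq_zero j hjm) hj
  have hsupp : ∀ i ≠ m, ∀ k, k ≠ i → k ≠ m → a.repr (b i) k = 0 := by
    intro i him k hki hkm
    have h := hkey i m k him hki hkm
    rw [hφ_eq_zero i him, zero_mul] at h
    exact (mul_eq_zero.1 h).resolve_left hφm
  refine ⟨a m, a.ne_zero m, fun i => ?_⟩
  rcases eq_or_ne i m with rfl | him
  · exact subset_span (Set.mem_insert _ _)
  refine a.mem_span_pair_of_repr_eq_zero (hsupp i him) fun him_zero => ?_
  obtain ⟨k, hki, hk⟩ := a.exists_repr_ne_zero_of_notMem_span_singleton (hb i)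
  rcases eq_or_ne k m with rfl | hkm
  · exact hk him_zero
  · exact hk (hsupp i him k hki hkm)

theorem exists_mem_span_pair [Finite ι] (b : ι → V) (φ : V →ₗ[K] K) (hb : ∀ i, b i ∉ K ∙ a i)
    (hφ : ∃ m, φ (b m) ≠ 0)
    (hkey : ∀ i j k, i ≠ j → k ≠ i → k ≠ j →
      φ (b j) * a.repr (b i) k = φ (b i) * a.repr (b j) k) :
    ∃ w ≠ 0, ∀ i, w ∈ span K {a i, b i} := by
  rcases em (∃ i₀, φ (b i₀) = 0) with ⟨i₀, hi₀⟩ | hall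
  · exact a.exists_mem_span_pair_of_eq_zero b φ hb hφ hi₀ hkey
  · have : Nonempty ι := hφ.nonempty
    exact a.exists_mem_span_pair_of_forall_ne_zero b φ hb (not_exists.1 hall) hkey

end Module.Basis

section Projective

variable {K V : Type*} [Field K] [AddCommGroup V] [Module K V]

theorem pspan_pair_s15 (x y : ℙ K V) : pspan K {x, y} = span K {x.rep, y.rep} := by
  rw [pspan, iSup_pair, submodule_eq, submodule_eq, span_insert]

theorem pspan_range {ι : Type*} (f : ι → ℙ K V) :
    pspan K (Set.range f) = span K (Set.range fun i => (f i).rep) := by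
  rw [pspan, iSup_range, span_range_eq_iSup]
  simp only [submodule_eq]

theorem Projectivization.rep_mem_span_singleton_rep_iff {P Q : ℙ K V} :
    Q.rep ∈ K ∙ P.rep ↔ Q = P := by
  rw [mem_span_singleton, eq_comm, ← mk_eq_mk_iff' K _ _ Q.rep_nonzero P.rep_nonzero, mk_rep,
    mk_rep, eq_comm]

end Projective

theorem perspective_hyperplane_to_point_general {K : Type*} [Field K] {n : ℕ}
    (A B : Fin (n+1) → ℙ K (Fin (n+1) → K))
    (hA : pspan K (Set.range A) = ⊤) (hB : pspan K (Set.range B) = ⊤)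
    (hpt : ∀ i j : Fin (n+1), A i ≠ B j)
    -- `A`, `B` are in perspective from a hyperplane `v`
    (hv : ∃ v : Submodule K (Fin (n+1) → K), Module.finrank K v = n ∧
      ∀ t : ℕ, 1 ≤ t → t ≤ n - 1 → ∀ S : Finset (Fin (n+1)), S.card = t + 1 →
        Module.finrank K ↥(pspan K (A '' ↑S) ⊓ pspan K (B '' ↑S)) = t ∧
        pspan K (A '' ↑S) ⊓ pspan K (B '' ↑S) ≤ v) :
    ∃ V : ℙ K (Fin (n+1) → K), ∀ i : Fin (n+1),
      V.submodule ≤ pspan K {A i, B i} := by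
  obtain ⟨v, hv_rank, hv_persp⟩ := hv
  obtain ⟨a, ha⟩ : ∃ a : Module.Basis (Fin (n+1)) K (Fin (n+1) → K), ∀ i, a i = (A i).rep :=
    ⟨basisOfTopLeSpanOfCardEqFinrank _ (by rw [← pspan_range, hA]) (by simp), by simp⟩
  obtain ⟨φ, hφ0, hvφ⟩ := v.exists_le_ker_of_lt_top (lt_top_iff_ne_top.2 fun h => by
    rw [h, finrank_top, Module.finrank_fin_fun] at hv_rank
    omega)
  have hφ : ∃ m, φ (B m).rep ≠ 0 := by
    by_contra! h
    exact hφ0 (LinearMap.ext_on_range (by rw [← pspan_range, hB]) (by simpa using h))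
  have hkey : ∀ i j k, i ≠ j → k ≠ i → k ≠ j →
      φ (B j).rep * a.repr (B i).rep k = φ (B i).rep * a.repr (B j).rep k := by
    intro i j k hij hki hkj
    obtain ⟨hrank, hle⟩ := hv_persp 1 le_rfl (by omega) {i, j} (Finset.card_pair hij)
    have hne : pspan K (A '' ↑({i, j} : Finset _)) ⊓ pspan K (B '' ↑({i, j} : Finset _)) ≠ ⊥ :=
      fun h => by rw [← finrank_eq_zero, hrank] at h; exact one_ne_zero h
    simp only [Finset.coe_pair, Set.image_pair, pspan_pair_s15] at hne hle
    obtain ⟨p, hp, hp0⟩ := (Submodule.ne_bot_iff _).1 hne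
    exact a.mul_repr_eq_of_mem_span_pair_of_mem_ker (fun i => (B i).rep) φ hki hkj hp0
      (by simpa only [ha] using (mem_inf.1 hp).1) (mem_inf.1 hp).2 (hvφ (hle hp))
  obtain ⟨w, hw0, hw⟩ := a.exists_mem_span_pair (fun i => (B i).rep) φ
    (fun i => by rw [ha, rep_mem_span_singleton_rep_iff]; exact (hpt i i).symm) hφ hkey
  refine ⟨mk K w hw0, fun i => ?_⟩
  rw [submodule_mk, pspan_pair_s15, span_singleton_le_iff_mem, ← ha]
  exact hw i

/-- Converse of the extended Desargues theorem: two simplexes of projective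
`n`-space with no common point and no common face which are in perspective
from a hyperplane are in perspective from a point. -/
theorem perspective_hyperplane_to_point {K : Type*} [Field K] {n : ℕ}
    (A B : Fin (n+1) → ℙ K (Fin (n+1) → K))
    (hA : pspan K (Set.range A) = ⊤) (hB : pspan K (Set.range B) = ⊤)
    (hpt : ∀ i j : Fin (n+1), A i ≠ B j)
    (hface : ∀ i j : Fin (n+1),
      pspan K (A '' {k | k ≠ i}) ≠ pspan K (B '' {k | k ≠ j}))
    -- `A`, `B` are in perspective from a hyperplane `v`
    (hv : ∃ v : Submodule K (Fin (n+1) → K), Module.finrank K v = n ∧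
      ∀ t : ℕ, 1 ≤ t → t ≤ n - 1 → ∀ S : Finset (Fin (n+1)), S.card = t + 1 →
        Module.finrank K ↥(pspan K (A '' ↑S) ⊓ pspan K (B '' ↑S)) = t ∧
        pspan K (A '' ↑S) ⊓ pspan K (B '' ↑S) ≤ v) :
    ∃ V : ℙ K (Fin (n+1) → K), ∀ i : Fin (n+1),
      V.submodule ≤ pspan K {A i, B i} :=
  perspective_hyperplane_to_point_general A B hA hB hpt hv
end
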